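/- For every graph G and all positive integers r, k, a, one has σ(G, a·r, a·k) ≤ a·σ(G, r, k). -/

import Mathlib

/-- One simultaneous move in the game: each agent stays put or moves along an edge. -/
def RSMove {V : Type*} (G : SimpleGraph V) {ι : Type*} (p q : ι → V) : Prop :=
  ∀ i, q i = p i ∨ G.Adj (p i) (q i)

/-- The spies have a winning strategy in 𝒢(G,r,s,k): there is a causal function `f`
(depending only on the history so far) producing the spies' positions at the end of each
round from the revolutionaries' positions up to that round (the revolutionaries
place/move first in each round), such that against every legal play of the
revolutionaries the spies' play is legal and, at the end of every round, each vertex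
holding at least `k` revolutionaries is occupied by a spy. -/
def SpiesWin {V : Type*} (G : SimpleGraph V) (r s k : ℕ) : Prop :=
  ∃ f : (ℕ → Fin r → V) → ℕ → Fin s → V,
    (∀ R R' n, (∀ m, m ≤ n → R m = R' m) → f R n = f R' n) ∧
    ∀ R : ℕ → Fin r → V, (∀ n, RSMove G (R n) (R (n + 1))) →
      (∀ n, RSMove G (f R n) (f R (n + 1))) ∧
      (∀ n v, k ≤ Set.ncard {i | R n i = v} → ∃ j, f R n j = v)

/-- σ(G, r, k): the minimum number of spies needed to win 𝒢(G,r,s,k). -/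
noncomputable def spySigma {V : Type*} (G : SimpleGraph V) (r k : ℕ) : ℕ :=
  sInf {s | SpiesWin G r s k}

/-!
Split the `a * r` revolutionaries into `a` teams of `r` and the `a * s` spies into `a` squads
of `s`, and let squad `t` play a winning strategy of 𝒢(G,r,s,k) against team `t`. A meeting of
size `a * k` contains, by pigeonhole, at least `k` revolutionaries of a single team, so the
corresponding squad guards it.
-/

theorem exists_le_ncard_slice_of_mul_le_ncard {α β : Type*} [Fintype α] [Nonempty α] [Finite β]
    (p : α × β → Prop) {k : ℕ} (h : Fintype.card α * k ≤ {x | p x}.ncard) :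
    ∃ t, k ≤ {i | p (t, i)}.ncard := by
  classical
  have := Fintype.ofFinite β
  simp only [Set.ncard_eq_toFinset_card', Set.toFinset_ofPred, Finset.card_filter,
    Fintype.sum_prod_type] at h ⊢
  rw [← smul_eq_mul, ← Finset.card_univ, ← Finset.sum_const] at h
  obtain ⟨t, -, ht⟩ := Finset.exists_le_of_sum_le Finset.univ_nonempty h
  exact ⟨t, ht⟩

section Game

variable {V : Type*} (G : SimpleGraph V)

theorem spiesWin_self (r : ℕ) {k : ℕ} (hk : 0 < k) : SpiesWin G r r k := by
  refine ⟨fun R => R, fun R R' n h => h n le_rfl, fun R hR => ⟨hR, fun n v hv => ?_⟩⟩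
  obtain ⟨i, hi⟩ := Set.nonempty_of_ncard_ne_zero (hk.trans_le hv).ne'
  exact ⟨i, hi⟩

theorem spiesWin_spySigma (r : ℕ) {k : ℕ} (hk : 0 < k) : SpiesWin G r (spySigma G r k) k :=
  Nat.sInf_mem (s := {s | SpiesWin G r s k}) ⟨r, spiesWin_self G r hk⟩

def teamPlay {r : ℕ} (a : ℕ) (R : ℕ → Fin (a * r) → V) (t : Fin a) (n : ℕ) (i : Fin r) : V :=
  R n (finProdFinEquiv (t, i))

theorem spiesWin_mul {r s k a : ℕ} (ha : 0 < a) (h : SpiesWin G r s k) :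
    SpiesWin G (a * r) (a * s) (a * k) := by
  obtain ⟨f, hcausal, hwin⟩ := h
  have : Nonempty (Fin a) := ⟨⟨0, ha⟩⟩
  let squad (j : Fin (a * s)) : Fin a × Fin s := finProdFinEquiv.symm j
  refine ⟨fun R n j => f (teamPlay a R (squad j).1) n (squad j).2, ?_, fun R hR => ?_⟩
  · intro R R' n hRR'
    funext j
    exact congrFun (hcausal _ _ n fun m hm => funext fun i => congrFun (hRR' m hm) _) _
  have hteam : ∀ t n, RSMove G (teamPlay a R t n) (teamPlay a R t (n + 1)) :=
    fun t n i => hR n _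
  refine ⟨fun n j => (hwin _ (hteam _)).1 n _, fun n v hv => ?_⟩
  have hmeet : Fintype.card (Fin a) * k ≤
      {x : Fin a × Fin r | R n (finProdFinEquiv x) = v}.ncard := by
    rw [Fintype.card_fin]
    calc a * k ≤ {i | R n i = v}.ncard := hv
      _ = (finProdFinEquiv ⁻¹' {i | R n i = v}).ncard :=
        (Set.ncard_preimage_of_injective_subset_range finProdFinEquiv.injective (by simp)).symm
  obtain ⟨t, ht⟩ := exists_le_ncard_slice_of_mul_le_ncard _ hmeet
  obtain ⟨j, hj⟩ := (hwin _ (hteam t)).2 n v ht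
  exact ⟨finProdFinEquiv (t, j), by simpa only [squad, Equiv.symm_apply_apply] using hj⟩

end Game

theorem stmt_8_general {V : Type*} (G : SimpleGraph V) (r k a : ℕ) (hk : 0 < k)
    (ha : 0 < a) : spySigma G (a * r) (a * k) ≤ a * spySigma G r k :=
  Nat.sInf_le (spiesWin_mul G ha (spiesWin_spySigma G r hk))

theorem stmt_8 {V : Type*} (G : SimpleGraph V) (r k a : ℕ) (hr : 0 < r) (hk : 0 < k)
    (ha : 0 < a) : spySigma G (a * r) (a * k) ≤ a * spySigma G r k :=
  stmt_8_general G r k a hk ha
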